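/- For online gradient descent on α-strongly convex differentiable losses with gradients bounded by G on X and stepsizes α_t = 1/(α t), the regret satisfies Reg(T) ≤ (G²/(2α)) (1 + log T). -/

import Mathlib

/-!
Strong convexity gives `ℓ_t(x_t) - ℓ_t(z) ≤ ⟪g_t, x_t - z⟫ - (α/2)‖x_t - z‖²`, and since projecting
onto the convex set `X` does not increase the distance to any `z ∈ X`, a step of size
`η_t = 1/(αt)` gives `⟪g_t, x_t - z⟫ ≤ (‖x_t - z‖² - ‖x_{t+1} - z‖²)/(2η_t) + η_t G²/2`.
With this step size the distance terms telescope, as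
`(α(t-1)/2)‖x_t - z‖² - (αt/2)‖x_{t+1} - z‖²`, leaving `Σ G²/(2αt) = (G²/(2α)) H_T`, and
`H_T ≤ 1 + log T`. The bound holds for every comparator `z ∈ X`, hence for the infimum.
-/

open Finset

open AffineMap in
theorem ConvexOn.le_sub_of_hasFDerivAt {E : Type*} [NormedAddCommGroup E] [NormedSpace ℝ E]
    {s : Set E} {f : E → ℝ} {f' : E →L[ℝ] ℝ} {x y : E} (hf : ConvexOn ℝ s f)
    (hx : x ∈ s) (hy : y ∈ s) (hfx : HasFDerivAt f f' x) :
    f' (y - x) ≤ f y - f x := by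
  set L : ℝ →ᵃ[ℝ] E := lineMap x y
  have hφ : ConvexOn ℝ (L ⁻¹' s) (f ∘ L) := hf.comp_affineMap L
  have hφ' : HasDerivAt (f ∘ L) (f' (y - x)) 0 := by
    have : HasFDerivAt f f' (L 0) := by simpa [L] using hfx
    exact this.comp_hasDerivAt 0 hasDerivAt_lineMap
  have := hφ.le_slope_of_hasDerivAt (x := 0) (y := 1) (by simpa [L]) (by simpa [L]) one_pos hφ'
  simpa [slope, L] using this

variable {E : Type*} [NormedAddCommGroup E] [InnerProductSpace ℝ E]

theorem StrongConvexOn.subset {s t : Set E} {m : ℝ} {f : E → ℝ} (hf : StrongConvexOn t m f)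
    (hst : s ⊆ t) (hs : Convex ℝ s) : StrongConvexOn s m f :=
  strongConvexOn_iff_convex.mpr ((strongConvexOn_iff_convex.mp hf).subset hst hs)

theorem StrongConvexOn.le_sub_of_hasGradientAt [CompleteSpace E] {s : Set E} {m : ℝ}
    {f : E → ℝ} {f' x y : E} (hf : StrongConvexOn s m f) (hx : x ∈ s) (hy : y ∈ s)
    (hfx : HasGradientAt f f' x) :
    inner ℝ f' (y - x) + m / 2 * ‖y - x‖ ^ 2 ≤ f y - f x := by
  have hsq : HasFDerivAt (fun z : E => m / 2 * ‖z‖ ^ 2) ((m / 2) • (2 • innerSL ℝ x)) x :=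
    ((hasFDerivAt_id x).norm_sq).const_mul (m / 2)
  have key := (strongConvexOn_iff_convex.mp hf).le_sub_of_hasFDerivAt hx hy
    ((hasGradientAt_iff_hasFDerivAt.mp hfx).sub hsq)
  simp only [sub_apply, InnerProductSpace.toDual_apply_apply, smul_apply, innerSL_apply_apply,
    smul_eq_mul, nsmul_eq_mul, Nat.cast_ofNat, inner_sub_right, real_inner_self_eq_norm_sq] at key
  rw [norm_sub_sq_real, inner_sub_right, real_inner_comm x y]
  linarith

theorem Convex.norm_sub_le_of_isMinOn {K : Set E} (hK : Convex ℝ K) {y p z : E} (hp : p ∈ K)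
    (hmin : IsMinOn (‖· - y‖) K p) (hz : z ∈ K) : ‖p - z‖ ≤ ‖y - z‖ := by
  have : Nonempty K := ⟨⟨p, hp⟩⟩
  have hinf : ‖y - p‖ = ⨅ w : K, ‖y - w‖ := by
    refine le_antisymm (le_ciInf fun w => ?_)
      (ciInf_le (f := fun w : K => ‖y - w‖) ⟨0, ?_⟩ ⟨p, hp⟩)
    · rw [norm_sub_rev y, norm_sub_rev y]; exact hmin w.2
    · rintro _ ⟨w, rfl⟩; exact norm_nonneg _
  have hvar := (norm_eq_iInf_iff_real_inner_le_zero hK hp).mp hinf z hz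
  have hexp : ‖y - z‖ ^ 2 = ‖y - p‖ ^ 2 - 2 * inner ℝ (y - p) (z - p) + ‖p - z‖ ^ 2 := by
    rw [← norm_sub_rev z p, ← norm_sub_sq_real, sub_sub_sub_cancel_right]
  nlinarith [norm_nonneg (p - z), norm_nonneg (y - z), sq_nonneg ‖y - p‖]

theorem Convex.inner_sub_le_of_isMinOn_sub_smul {K : Set E} (hK : Convex ℝ K) {x v p z : E}
    {η : ℝ} (hη : 0 < η) (hp : p ∈ K) (hmin : IsMinOn (‖· - (x - η • v)‖) K p) (hz : z ∈ K) :
    inner ℝ v (x - z) ≤ (‖x - z‖ ^ 2 - ‖p - z‖ ^ 2) / (2 * η) + η / 2 * ‖v‖ ^ 2 := by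
  have hcontract : ‖p - z‖ ^ 2 ≤ ‖x - η • v - z‖ ^ 2 :=
    pow_le_pow_left₀ (norm_nonneg _) (hK.norm_sub_le_of_isMinOn hp hmin hz) 2
  have hexpand :
      ‖x - η • v - z‖ ^ 2 = ‖x - z‖ ^ 2 - 2 * η * inner ℝ v (x - z) + η ^ 2 * ‖v‖ ^ 2 := by
    rw [sub_right_comm, norm_sub_sq_real, real_inner_smul_right, norm_smul,
      Real.norm_of_nonneg hη.le, real_inner_comm]
    ring
  rw [← sub_le_iff_le_add, le_div_iff₀ (by positivity)]
  nlinarith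

theorem StrongConvexOn.sub_le_of_isMinOn_gradient_step [CompleteSpace E] {K : Set E}
    (hK : Convex ℝ K) {f : E → ℝ} {α τ : ℝ} (hf : StrongConvexOn K α f) (hα : 0 < α) (hτ : 0 < τ)
    {x v p z : E} (hx : x ∈ K) (hz : z ∈ K) (hv : HasGradientAt f v x) (hp : p ∈ K)
    (hmin : IsMinOn (‖· - (x - (1 / (α * τ)) • v)‖) K p) :
    f x - f z ≤ α / 2 * ((τ - 1) * ‖x - z‖ ^ 2 - τ * ‖p - z‖ ^ 2) + ‖v‖ ^ 2 / (2 * α * τ) := by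
  have hsc := hf.le_sub_of_hasGradientAt hx hz hv
  rw [← neg_sub x z, inner_neg_right, norm_neg] at hsc
  have hstep := hK.inner_sub_le_of_isMinOn_sub_smul (by positivity) hp hmin hz
  have heta : (‖x - z‖ ^ 2 - ‖p - z‖ ^ 2) / (2 * (1 / (α * τ))) + 1 / (α * τ) / 2 * ‖v‖ ^ 2
      = α * τ / 2 * (‖x - z‖ ^ 2 - ‖p - z‖ ^ 2) + ‖v‖ ^ 2 / (2 * α * τ) := by
    field_simp
  linarith

theorem Finset.sum_Icc_le_sum_of_le_telescoping {r a e : ℕ → ℝ} (ha : ∀ t, 0 ≤ a t)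
    (h : ∀ t, 1 ≤ t → r t ≤ ((t : ℝ) - 1) * a t - t * a (t + 1) + e t) (T : ℕ) :
    ∑ t ∈ Icc 1 T, r t ≤ ∑ t ∈ Icc 1 T, e t := by
  suffices ∑ t ∈ Icc 1 T, r t ≤ ∑ t ∈ Icc 1 T, e t - T * a (T + 1) by
    nlinarith [mul_nonneg T.cast_nonneg (ha (T + 1))]
  induction T with
  | zero => simp
  | succ n ih =>
    rw [sum_Icc_succ_top (by omega), sum_Icc_succ_top (by omega)]
    have := h (n + 1) (by omega)
    push_cast at this ⊢
    linarith

theorem ogd_sum_sub_le_harmonic [CompleteSpace E] {K : Set E} (hK : Convex ℝ K) {α G : ℝ}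
    (hα : 0 < α) {ℓ : ℕ → E → ℝ} {g : ℕ → E → E} (hsc : ∀ t, StrongConvexOn K α (ℓ t))
    (hgrad : ∀ t, ∀ x ∈ K, HasGradientAt (ℓ t) (g t x) x) (hG : ∀ t, ∀ x ∈ K, ‖g t x‖ ≤ G)
    {P : E → E} (hP : ∀ y, P y ∈ K ∧ IsMinOn (‖· - y‖) K (P y)) {x : ℕ → E} (hx1 : x 1 ∈ K)
    (hiter : ∀ t, 1 ≤ t → x (t + 1) = P (x t - (1 / (α * t)) • g t (x t)))
    {z : E} (hz : z ∈ K) (T : ℕ) :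
    ∑ t ∈ Icc 1 T, (ℓ t (x t) - ℓ t z) ≤ G ^ 2 / (2 * α) * harmonic T := by
  have hmem : ∀ t, 1 ≤ t → x t ∈ K :=
    Nat.le_induction hx1 fun n hn _ => hiter n hn ▸ (hP _).1
  have hround : ∀ t, 1 ≤ t → ℓ t (x t) - ℓ t z ≤ ((t : ℝ) - 1) * (α / 2 * ‖x t - z‖ ^ 2)
      - t * (α / 2 * ‖x (t + 1) - z‖ ^ 2) + G ^ 2 / (2 * α) * (t : ℝ)⁻¹ := by
    intro t ht
    have hτ : (0 : ℝ) < t := by exact_mod_cast ht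
    have hstep := (hsc t).sub_le_of_isMinOn_gradient_step hK hα hτ (hmem t ht) hz
      (hgrad t _ (hmem t ht)) (hiter t ht ▸ (hP _).1) (hiter t ht ▸ (hP _).2)
    have hgrad_sq : ‖g t (x t)‖ ^ 2 / (2 * α * t) ≤ G ^ 2 / (2 * α) * (t : ℝ)⁻¹ := by
      rw [← div_eq_mul_inv, div_div]
      gcongr
      exact hG t _ (hmem t ht)
    linarith
  calc ∑ t ∈ Icc 1 T, (ℓ t (x t) - ℓ t z)
      ≤ ∑ t ∈ Icc 1 T, G ^ 2 / (2 * α) * (t : ℝ)⁻¹ :=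
        sum_Icc_le_sum_of_le_telescoping (fun t => by positivity) hround T
    _ = G ^ 2 / (2 * α) * harmonic T := by
        rw [← mul_sum, harmonic_eq_sum_Icc]
        push_cast
        rfl

theorem ogd_regret_log_general
    (d T : ℕ)
    (X : Set (EuclideanSpace ℝ (Fin d)))
    (hXconv : Convex ℝ X)
    (α G : ℝ) (hαpos : 0 < α)
    (ℓ : ℕ → EuclideanSpace ℝ (Fin d) → ℝ)
    (g : ℕ → EuclideanSpace ℝ (Fin d) → EuclideanSpace ℝ (Fin d))
    (hsc : ∀ t, StrongConvexOn Set.univ α (ℓ t))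
    (hgrad : ∀ t x, HasGradientAt (ℓ t) (g t x) x)
    (hGbound : ∀ t, ∀ x ∈ X, ‖g t x‖ ≤ G)
    (P : EuclideanSpace ℝ (Fin d) → EuclideanSpace ℝ (Fin d))
    (hP : ∀ y, P y ∈ X ∧ ∀ z ∈ X, ‖P y - y‖ ≤ ‖z - y‖)
    (x : ℕ → EuclideanSpace ℝ (Fin d))
    (hx1 : x 1 ∈ X)
    (hiter : ∀ t, 1 ≤ t → x (t + 1) = P (x t - (1 / (α * t)) • g t (x t))) :
    (∑ t ∈ Finset.Icc 1 T, ℓ t (x t)) -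
      sInf ((fun z => ∑ t ∈ Finset.Icc 1 T, ℓ t z) '' X) ≤
      (G ^ 2 / (2 * α)) * (1 + Real.log T) := by
  have hregret : ∀ z ∈ X, ∑ t ∈ Icc 1 T, ℓ t (x t) - ∑ t ∈ Icc 1 T, ℓ t z
      ≤ G ^ 2 / (2 * α) * (1 + Real.log T) := fun z hz => by
    rw [← sum_sub_distrib]
    refine (ogd_sum_sub_le_harmonic hXconv hαpos
      (fun t => (hsc t).subset (Set.subset_univ X) hXconv) (fun t y _ => hgrad t y) hGbound
      (fun y => ⟨(hP y).1, isMinOn_iff.mpr (hP y).2⟩) hx1 hiter hz T).trans ?_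
    exact mul_le_mul_of_nonneg_left (harmonic_le_one_add_log T) (by positivity)
  have hinf : ∑ t ∈ Icc 1 T, ℓ t (x t) - G ^ 2 / (2 * α) * (1 + Real.log T)
      ≤ sInf ((fun z => ∑ t ∈ Icc 1 T, ℓ t z) '' X) := by
    refine le_csInf ⟨_, x 1, hx1, rfl⟩ ?_
    rintro _ ⟨z, hz, rfl⟩
    linarith [hregret z hz]
  linarith

/-- Online gradient descent with stepsizes `α_t = 1/(α t)` on `α`-strongly convex
differentiable losses with gradients bounded by `G` achieves logarithmic regret
`Reg(T) ≤ (G²/(2α)) (1 + log T)`. -/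
theorem ogd_regret_log
    (d T : ℕ) (hT : 1 ≤ T)
    (X : Set (EuclideanSpace ℝ (Fin d)))
    (hXc : IsCompact X) (hXconv : Convex ℝ X) (hXne : X.Nonempty)
    (α G : ℝ) (hαpos : 0 < α) (hG : 0 < G)
    (ℓ : ℕ → EuclideanSpace ℝ (Fin d) → ℝ)
    (g : ℕ → EuclideanSpace ℝ (Fin d) → EuclideanSpace ℝ (Fin d))
    (hsc : ∀ t, StrongConvexOn Set.univ α (ℓ t))
    (hgrad : ∀ t x, HasGradientAt (ℓ t) (g t x) x)
    (hGbound : ∀ t, ∀ x ∈ X, ‖g t x‖ ≤ G)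
    (P : EuclideanSpace ℝ (Fin d) → EuclideanSpace ℝ (Fin d))
    (hP : ∀ y, P y ∈ X ∧ ∀ z ∈ X, ‖P y - y‖ ≤ ‖z - y‖)
    (x : ℕ → EuclideanSpace ℝ (Fin d))
    (hx1 : x 1 ∈ X)
    (hiter : ∀ t, 1 ≤ t → x (t + 1) = P (x t - (1 / (α * t)) • g t (x t))) :
    (∑ t ∈ Finset.Icc 1 T, ℓ t (x t)) -
      sInf ((fun z => ∑ t ∈ Finset.Icc 1 T, ℓ t z) '' X) ≤
      (G ^ 2 / (2 * α)) * (1 + Real.log T) :=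
  ogd_regret_log_general d T X hXconv α G hαpos ℓ g hsc hgrad hGbound P hP x hx1 hiter
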